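/- Fix n > 3 and let 𝒢_n be the set of isomorphism classes of simple graphs on n vertices. Let A, B, C ⊆ 𝒢_n be the classes of graphs G of order n and size m satisfying m·M1(G) > n·M2(G), m·M1(G) = n·M2(G), and m·M1(G) < n·M2(G), respectively. Then |A| + |B| < |C|. -/

import Mathlib

/-- Degree of a vertex (classical, so it works for any graph on a finite vertex type). -/
noncomputable def gdeg {V : Type*} [Fintype V] (G : SimpleGraph V) (v : V) : ℕ := by
  classical exact G.degree v

/-- First Zagreb index: sum of squares of the vertex degrees. -/
noncomputable def zagrebM1 {V : Type*} [Fintype V] (G : SimpleGraph V) : ℕ :=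
  ∑ v, gdeg G v ^ 2

/-- Second Zagreb index: sum of d(u)·d(v) over the edges uv. -/
noncomputable def zagrebM2 {V : Type*} [Fintype V] (G : SimpleGraph V) : ℕ := by
  classical exact
    ∑ e ∈ G.edgeFinset,
      Sym2.lift ⟨fun u v => gdeg G u * gdeg G v, fun u v => by simp [Nat.mul_comm]⟩ e

/-- The size (number of edges) of a graph. -/
noncomputable def gsize {V : Type*} [Fintype V] (G : SimpleGraph V) : ℕ := by
  classical exact G.edgeFinset.card

/-- A graph is `r`-regular if every vertex has degree `r`. -/
def gregOfDeg {V : Type*} [Fintype V] (G : SimpleGraph V) (r : ℕ) : Prop :=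
  ∀ v, gdeg G v = r

/-- A graph is regular if all its vertices have the same degree. -/
def gregular {V : Type*} [Fintype V] (G : SimpleGraph V) : Prop :=
  ∃ r, gregOfDeg G r

/-- The setoid identifying isomorphic simple graphs on `Fin n`. -/
def graphIsoSetoid (n : ℕ) : Setoid (SimpleGraph (Fin n)) where
  r G H := Nonempty (G ≃g H)
  iseqv := ⟨fun _ => ⟨SimpleGraph.Iso.refl⟩,
    fun ⟨f⟩ => ⟨f.symm⟩, fun ⟨f⟩ ⟨g⟩ => ⟨f.trans g⟩⟩

/-- `𝒢_n`: the type of isomorphism classes of simple graphs on `n` vertices. -/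
def IsoClasses (n : ℕ) := Quotient (graphIsoSetoid n)

/-- The set of isomorphism classes of graphs on `n` vertices satisfying a predicate. -/
def isoClassesOf (n : ℕ) (P : SimpleGraph (Fin n) → Prop) : Set (IsoClasses n) :=
  Quotient.mk (graphIsoSetoid n) '' {G | P G}

/-!
Write `F(G) = m·M1(G) - n·M2(G)`. Expressing the degrees of `Gᶜ` through those of `G` gives
`2 (F(G) + F(Gᶜ)) = -(n - 2) (n·M1(G) - (2m)²)`, and by Cauchy–Schwarz the right-hand side is
negative unless `G` is regular. Hence a non-regular graph with `F(G) ≥ 0` has `F(Gᶜ) < 0`, and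
`G ↦ Gᶜ` sends these classes into `C`. A regular graph is sent instead to `G - e` for an edge `e`
(to `P₃` if `G` has no edges); these graphs and their complements have `F < 0`, and `G` is
recovered from `G - e` because the ends of `e` are its only vertices of degree `r - 1`. The
resulting injection `A ∪ B → C` misses the class of the complement of `P₃`.
-/

open Finset SimpleGraph

namespace SimpleGraph

variable {V W : Type*}

def Iso.compl {G : SimpleGraph V} {G' : SimpleGraph W} (φ : G ≃g G') : Gᶜ ≃g G'ᶜ where
  toEquiv := φ.toEquiv
  map_rel_iff' := by simp [φ.map_adj_iff]

theorem Iso.map_toEmbedding {G : SimpleGraph V} {G' : SimpleGraph W} (φ : G ≃g G') :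
    G.map φ.toEmbedding = G' := by
  ext a b
  obtain ⟨a, rfl⟩ := φ.surjective a
  obtain ⟨b, rfl⟩ := φ.surjective b
  exact map_adj_apply.trans φ.map_adj_iff.symm

section Darts

variable [Fintype V] (G : SimpleGraph V) [DecidableRel G.Adj] {M : Type*} [AddCommMonoid M]

theorem sum_darts_eq_sum_neighborFinset (F : V → V → M) :
    ∑ d : G.Dart, F d.fst d.snd = ∑ v, ∑ w ∈ G.neighborFinset v, F v w := by
  simp_rw [neighborFinset_eq_filter, sum_filter, ← Fintype.sum_prod_type', ← sum_filter]
  exact sum_bij' (fun d _ ↦ d.toProd) (fun p hp ↦ ⟨p, (mem_filter.1 hp).2⟩) (by simp)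
    (by simp) (by simp) (by simp) (by simp)

theorem sum_darts_edge (g : Sym2 V → M) :
    ∑ d : G.Dart, g d.edge = 2 • ∑ e ∈ G.edgeFinset, g e := by
  classical
  rw [← sum_fiberwise_of_maps_to (g := Dart.edge) (t := G.edgeFinset)
    (fun d _ ↦ mem_edgeFinset.2 d.edge_mem), smul_sum]
  refine sum_congr rfl fun e he ↦ ?_
  rw [sum_congr rfl fun d hd ↦ by rw [(mem_filter.1 hd).2], sum_const,
    G.dart_edge_fiber_card e (mem_edgeFinset.1 he)]

theorem sum_neighborFinset_comm (F : V → V → M) :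
    ∑ v, ∑ w ∈ G.neighborFinset v, F v w = ∑ v, ∑ w ∈ G.neighborFinset v, F w v := by
  simp_rw [neighborFinset_eq_filter, sum_filter]
  rw [sum_comm]
  simp_rw [G.adj_comm]

theorem sum_compl_neighborFinset [DecidableEq V] {M : Type*} [AddCommGroup M]
    (F : V → V → M) : ∑ v, ∑ w ∈ Gᶜ.neighborFinset v, F v w =
      ∑ v, ∑ w, F v w - ∑ v, F v v - ∑ v, ∑ w ∈ G.neighborFinset v, F v w := by
  rw [← sum_sub_distrib, ← sum_sub_distrib]
  refine sum_congr rfl fun v _ ↦ ?_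
  rw [neighborFinset_compl, sum_sdiff_eq_sub (by simp), sum_singleton,
    ← sum_compl_add_sum (G.neighborFinset v)]
  abel

end Darts

end SimpleGraph

section Degrees

variable {V : Type*} [Fintype V] (G : SimpleGraph V)

theorem gdeg_eq_degree (v : V) [Fintype (G.neighborSet v)] : gdeg G v = G.degree v := by
  unfold gdeg
  congr!

theorem gdeg_eq_natCard (v : V) : gdeg G v = Nat.card (G.neighborSet v) := by
  classical
  rw [gdeg_eq_degree, ← card_neighborSet_eq_degree, Nat.card_eq_fintype_card]

theorem gdeg_lt_card (v : V) : gdeg G v < Fintype.card V := by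
  classical
  rw [gdeg_eq_degree]
  exact G.degree_lt_card_verts v

theorem gdeg_compl (v : V) : (gdeg Gᶜ v : ℤ) = Fintype.card V - 1 - gdeg G v := by
  classical
  have := G.degree_lt_card_verts v
  rw [gdeg_eq_degree, gdeg_eq_degree, degree_compl]
  omega

theorem gsize_eq_card_edgeFinset [Fintype G.edgeSet] : gsize G = #G.edgeFinset := by
  unfold gsize
  congr!

theorem zagrebM2_eq_sum_edgeFinset [Fintype G.edgeSet] :
    zagrebM2 G = ∑ e ∈ G.edgeFinset,
      Sym2.lift ⟨fun u v ↦ gdeg G u * gdeg G v, fun _ _ ↦ Nat.mul_comm _ _⟩ e := by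
  unfold zagrebM2
  congr!

theorem sum_gdeg_intCast : ∑ v, (gdeg G v : ℤ) = 2 * gsize G := by
  classical
  simp_rw [gdeg_eq_degree, gsize_eq_card_edgeFinset]
  exact_mod_cast G.sum_degrees_eq_twice_card_edges

theorem zagrebM1_intCast : (zagrebM1 G : ℤ) = ∑ v, (gdeg G v : ℤ) ^ 2 := by
  simp [zagrebM1]

variable [DecidableRel G.Adj]

theorem two_mul_zagrebM2_intCast :
    2 * (zagrebM2 G : ℤ) = ∑ v, ∑ w ∈ G.neighborFinset v, (gdeg G v : ℤ) * gdeg G w := by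
  have h : 2 * zagrebM2 G = ∑ v, ∑ w ∈ G.neighborFinset v, gdeg G v * gdeg G w := by
    rw [← sum_darts_eq_sum_neighborFinset, zagrebM2_eq_sum_edgeFinset, ← smul_eq_mul,
      ← sum_darts_edge]
    rfl
  exact_mod_cast h

theorem sum_neighborFinset_left (g : V → ℤ) :
    ∑ v, ∑ _w ∈ G.neighborFinset v, g v = ∑ v, gdeg G v * g v := by
  simp [gdeg_eq_degree]

theorem sum_neighborFinset_right (g : V → ℤ) :
    ∑ v, ∑ w ∈ G.neighborFinset v, g w = ∑ v, gdeg G v * g v := by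
  rw [G.sum_neighborFinset_comm (fun _ w ↦ g w), sum_neighborFinset_left]

end Degrees

section Map

variable {V W : Type*} [Fintype V] (f : W ↪ V) (G : SimpleGraph W)

theorem gdeg_map_of_notMem_range {v : V} (hv : v ∉ Set.range f) : gdeg (G.map f) v = 0 := by
  rw [gdeg_eq_natCard, Nat.card_eq_zero]
  left
  constructor
  rintro ⟨w, hw⟩
  obtain ⟨a, b, -, rfl, -⟩ := (map_adj f G v w).1 hw
  exact hv ⟨a, rfl⟩

variable [Fintype W]

theorem gdeg_map_apply (w : W) : gdeg (G.map f) (f w) = gdeg G w := by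
  rw [gdeg_eq_natCard, gdeg_eq_natCard, neighborSet_map, Nat.card_image_of_injective f.injective]

theorem gsize_map : gsize (G.map f) = gsize G := by
  classical
  rw [gsize_eq_card_edgeFinset, gsize_eq_card_edgeFinset, card_edgeFinset_map]

theorem zagrebM1_map : zagrebM1 (G.map f) = zagrebM1 G :=
  (Fintype.sum_of_injective f f.injective _ _
    (fun _ hv ↦ by rw [gdeg_map_of_notMem_range f G hv, zero_pow two_ne_zero])
    (fun w ↦ by rw [gdeg_map_apply])).symm

theorem zagrebM2_map : zagrebM2 (G.map f) = zagrebM2 G := by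
  classical
  rw [zagrebM2_eq_sum_edgeFinset, zagrebM2_eq_sum_edgeFinset, edgeFinset_map, sum_map]
  refine sum_congr rfl fun e _ ↦ ?_
  induction e using Sym2.ind
  simp [gdeg_map_apply]

end Map

noncomputable def zagrebGap {V : Type*} [Fintype V] (G : SimpleGraph V) : ℤ :=
  gsize G * zagrebM1 G - Fintype.card V * zagrebM2 G

namespace SimpleGraph.Iso

variable {V W : Type*} [Fintype V] [Fintype W] {G : SimpleGraph V} {G' : SimpleGraph W}
  (φ : G ≃g G')
include φ

theorem gdeg_eq (v : V) : gdeg G' (φ v) = gdeg G v := by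
  classical
  rw [gdeg_eq_degree, gdeg_eq_degree, φ.degree_eq]

theorem gsize_eq : gsize G' = gsize G := by
  rw [← φ.map_toEmbedding]
  exact gsize_map _ G

theorem zagrebM1_eq : zagrebM1 G' = zagrebM1 G := by
  rw [← φ.map_toEmbedding]
  exact zagrebM1_map _ G

theorem zagrebM2_eq : zagrebM2 G' = zagrebM2 G := by
  rw [← φ.map_toEmbedding]
  exact zagrebM2_map _ G

theorem zagrebGap_eq : zagrebGap G' = zagrebGap G := by
  rw [zagrebGap, zagrebGap, φ.gsize_eq, φ.zagrebM1_eq, φ.zagrebM2_eq,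
    Fintype.card_congr φ.toEquiv]

end SimpleGraph.Iso

section Complement

variable {V : Type*} [Fintype V] (G : SimpleGraph V)

theorem two_mul_gsize_compl :
    2 * (gsize Gᶜ : ℤ) = Fintype.card V * (Fintype.card V - 1) - 2 * gsize G := by
  simp_rw [← sum_gdeg_intCast, gdeg_compl, sum_sub_distrib, sum_const, card_univ, nsmul_eq_mul]
  ring

theorem zagrebM1_compl : (zagrebM1 Gᶜ : ℤ) = Fintype.card V * (Fintype.card V - 1) ^ 2 -
    4 * (Fintype.card V - 1) * gsize G + zagrebM1 G := by
  simp_rw [zagrebM1_intCast, gdeg_compl, sub_sq, sum_add_distrib, sum_sub_distrib, ← mul_sum,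
    sum_gdeg_intCast, sum_const, card_univ, nsmul_eq_mul]
  ring

theorem two_mul_zagrebM2_compl [DecidableEq V] [DecidableRel G.Adj] :
    2 * (zagrebM2 Gᶜ : ℤ) = (2 * gsize Gᶜ) ^ 2 - zagrebM1 Gᶜ -
      ((Fintype.card V - 1) ^ 2 * (2 * gsize G) - 2 * (Fintype.card V - 1) * zagrebM1 G +
        2 * zagrebM2 G) := by
  set c : ℤ := Fintype.card V - 1
  have hsplit : ∀ v w, (gdeg Gᶜ v : ℤ) * gdeg Gᶜ w =
      gdeg G v * gdeg G w + (c ^ 2 - c * gdeg G v) - c * gdeg G w := by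
    intro v w
    rw [gdeg_compl, gdeg_compl]
    ring
  have hedges : ∑ v, ∑ w ∈ G.neighborFinset v, (gdeg Gᶜ v : ℤ) * gdeg Gᶜ w =
      c ^ 2 * (2 * gsize G) - 2 * c * zagrebM1 G + 2 * zagrebM2 G := by
    simp_rw [hsplit, sum_sub_distrib, sum_add_distrib]
    rw [sum_neighborFinset_left G (fun v ↦ c ^ 2 - c * gdeg G v),
      sum_neighborFinset_right G (fun w ↦ c * gdeg G w), ← two_mul_zagrebM2_intCast,
      zagrebM1_intCast, ← sum_gdeg_intCast]
    simp only [mul_sub, sum_sub_distrib, ← sum_mul, mul_left_comm _ c, ← mul_sum, ← sq]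
    ring
  rw [two_mul_zagrebM2_intCast, sum_compl_neighborFinset, hedges, ← sum_mul_sum,
    ← sum_gdeg_intCast Gᶜ, zagrebM1_intCast Gᶜ]
  simp only [sq]

theorem zagrebGap_add_zagrebGap_compl :
    2 * (zagrebGap G + zagrebGap Gᶜ) = -(Fintype.card V - 2) *
      (Fintype.card V * zagrebM1 G - (2 * gsize G) ^ 2) := by
  classical
  have hcompl : 2 * zagrebGap Gᶜ =
      2 * gsize Gᶜ * zagrebM1 Gᶜ - Fintype.card V * (2 * zagrebM2 Gᶜ) := by
    unfold zagrebGap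
    ring
  rw [mul_add, hcompl, two_mul_zagrebM2_compl, two_mul_gsize_compl, zagrebM1_compl, zagrebGap]
  ring

end Complement

theorem sq_sum_lt_card_mul_sum_sq {ι R : Type*} [Fintype ι] [CommRing R] [LinearOrder R]
    [IsStrictOrderedRing R] {f : ι → R} (hf : ∃ i j, f i ≠ f j) :
    (∑ i, f i) ^ 2 < Fintype.card ι * ∑ i, f i ^ 2 := by
  have hlagrange : ∑ i, ∑ j, (f i - f j) ^ 2 =
      2 * (Fintype.card ι * ∑ i, f i ^ 2 - (∑ i, f i) ^ 2) := by
    simp only [sub_sq, sum_add_distrib, sum_sub_distrib, sum_const, card_univ, nsmul_eq_mul,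
      ← mul_sum, ← sum_mul]
    ring
  obtain ⟨i, j, hij⟩ := hf
  have hpos : 0 < ∑ i, ∑ j, (f i - f j) ^ 2 :=
    sum_pos' (fun _ _ ↦ sum_nonneg fun _ _ ↦ sq_nonneg _) ⟨i, mem_univ _,
      sum_pos' (fun _ _ ↦ sq_nonneg _)
        ⟨j, mem_univ _, pow_two_pos_of_ne_zero (sub_ne_zero.2 hij)⟩⟩
  linarith

section NonRegular

variable {V : Type*} [Fintype V] (G : SimpleGraph V)

theorem exists_gdeg_ne_of_not_gregular (hG : ¬ gregular G) : ∃ v w, gdeg G v ≠ gdeg G w := by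
  by_contra! h
  cases isEmpty_or_nonempty V with
  | inl => exact hG ⟨0, isEmptyElim⟩
  | inr hV => exact hG ⟨gdeg G hV.some, fun w ↦ h w _⟩

theorem zagrebGap_compl_neg_of_not_gregular (hV : 2 < Fintype.card V) (hG : ¬ gregular G)
    (hgap : 0 ≤ zagrebGap G) : zagrebGap Gᶜ < 0 := by
  have hcs : (2 * gsize G : ℤ) ^ 2 < Fintype.card V * zagrebM1 G := by
    obtain ⟨v, w, hvw⟩ := exists_gdeg_ne_of_not_gregular G hG
    rw [← sum_gdeg_intCast, zagrebM1_intCast]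
    exact sq_sum_lt_card_mul_sum_sq ⟨v, w, by exact_mod_cast hvw⟩
  have hV' : (2 : ℤ) < Fintype.card V := by exact_mod_cast hV
  nlinarith [zagrebGap_add_zagrebGap_compl G]

end NonRegular

section DeleteEdge

variable {V : Type*} (G : SimpleGraph V) {e : Sym2 V}

theorem notMem_of_deleteEdges_adj {v w : V} (h : (G.deleteEdges {e}).Adj v w) (hv : v ∈ e) :
    w ∉ e := by
  rw [deleteEdges_adj, Set.mem_singleton_iff] at h
  exact fun hw ↦ h.2 ((Sym2.mem_and_mem_iff h.1.ne).1 ⟨hv, hw⟩).symm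

variable (he : e ∈ G.edgeSet)
include he

theorem adj_iff_deleteEdges_adj_or {v w : V} :
    G.Adj v w ↔ (G.deleteEdges {e}).Adj v w ∨ s(v, w) = e := by
  rw [deleteEdges_adj, Set.mem_singleton_iff]
  refine ⟨fun h ↦ (em (s(v, w) = e)).symm.imp_left fun h' ↦ ⟨h, h'⟩, ?_⟩
  rintro (h | rfl)
  exacts [h.1, he]

theorem mk_eq_iff_of_mem_edgeSet {v w : V} : s(v, w) = e ↔ v ∈ e ∧ w ∈ e ∧ v ≠ w := by
  refine ⟨?_, fun ⟨hv, hw, hvw⟩ ↦ ((Sym2.mem_and_mem_iff hvw).1 ⟨hv, hw⟩).symm⟩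
  rintro rfl
  exact ⟨Sym2.mem_mk_left v w, Sym2.mem_mk_right v w, G.ne_of_adj he⟩

theorem sum_ite_mem_eq_two [Fintype V] [DecidableEq V] :
    ∑ v, (if v ∈ e then 1 else 0 : ℤ) = 2 := by
  have hfilter : ({v | v ∈ e} : Finset V) = e.toFinset := by
    ext
    simp
  rw [sum_boole, hfilter, Sym2.card_toFinset_of_not_isDiag e (G.not_isDiag_of_mem_edgeSet he)]
  rfl

variable [Fintype V] [DecidableEq V]

theorem gdeg_deleteEdges_add (v : V) :
    gdeg (G.deleteEdges {e}) v + (if v ∈ e then 1 else 0) = gdeg G v := by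
  classical
  have hinc : (G.deleteEdges {e}).incidenceFinset v = (G.incidenceFinset v).erase e := by
    ext e'
    simp [incidenceSet, edgeSet_deleteEdges, and_comm, and_left_comm]
  rw [gdeg_eq_degree, gdeg_eq_degree, ← card_incidenceFinset_eq_degree,
    ← card_incidenceFinset_eq_degree, hinc]
  split_ifs with hv
  · exact card_erase_add_one (by simp [incidenceSet, he, hv])
  · rw [erase_eq_of_notMem (by simp [incidenceSet, hv]), add_zero]

end DeleteEdge

section RegularDeleteEdge

variable {V : Type*} [Fintype V] [DecidableEq V] {G : SimpleGraph V} {r : ℕ} {e : Sym2 V}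
  (hG : gregOfDeg G r) (he : e ∈ G.edgeSet)
include hG he

theorem gdeg_deleteEdges_of_gregOfDeg (v : V) :
    (gdeg (G.deleteEdges {e}) v : ℤ) = r - if v ∈ e then 1 else 0 := by
  have := gdeg_deleteEdges_add G he v
  rw [hG v] at this
  split_ifs at this ⊢ <;> omega

theorem two_mul_gsize_deleteEdges_of_gregOfDeg :
    2 * (gsize (G.deleteEdges {e}) : ℤ) = Fintype.card V * r - 2 := by
  simp_rw [← sum_gdeg_intCast, gdeg_deleteEdges_of_gregOfDeg hG he, sum_sub_distrib,
    sum_ite_mem_eq_two G he, sum_const, card_univ, nsmul_eq_mul]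

theorem zagrebM1_deleteEdges_of_gregOfDeg :
    (zagrebM1 (G.deleteEdges {e}) : ℤ) = Fintype.card V * r ^ 2 - 4 * r + 2 := by
  have hsq : ∀ v, ((r : ℤ) - if v ∈ e then 1 else 0) ^ 2 =
      r ^ 2 - 2 * r * (if v ∈ e then 1 else 0) + (if v ∈ e then 1 else 0) := by
    intro v
    split_ifs <;> ring
  rw [zagrebM1_intCast]
  simp_rw [gdeg_deleteEdges_of_gregOfDeg hG he, hsq, sum_add_distrib, sum_sub_distrib, ← mul_sum,
    sum_ite_mem_eq_two G he, sum_const, card_univ, nsmul_eq_mul]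
  ring

theorem two_mul_zagrebM2_deleteEdges_of_gregOfDeg :
    2 * (zagrebM2 (G.deleteEdges {e}) : ℤ) =
      r * zagrebM1 (G.deleteEdges {e}) - 2 * r * (r - 1) := by
  classical
  set H := G.deleteEdges {e}
  set c : V → ℤ := fun v ↦ if v ∈ e then 1 else 0
  have hd : ∀ v, (gdeg H v : ℤ) = r - c v := gdeg_deleteEdges_of_gregOfDeg hG he
  have hend : ∀ v, c v * ∑ w ∈ H.neighborFinset v, (gdeg H w : ℤ) = c v * (r * (r - 1)) := by
    intro v
    by_cases hv : v ∈ e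
    · have hfull : ∀ w ∈ H.neighborFinset v, (gdeg H w : ℤ) = r := fun w hw ↦ by
        simp [hd, c, notMem_of_deleteEdges_adj G ((mem_neighborFinset _ _ _).1 hw) hv]
      rw [sum_congr rfl hfull, sum_const, card_neighborFinset_eq_degree, ← gdeg_eq_degree,
        nsmul_eq_mul, hd]
      simp only [c, hv, if_true]
      ring
    · simp [c, hv]
  calc 2 * (zagrebM2 H : ℤ)
      = ∑ v, (r * ∑ w ∈ H.neighborFinset v, (gdeg H w : ℤ) -
          c v * ∑ w ∈ H.neighborFinset v, (gdeg H w : ℤ)) := by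
        simp_rw [two_mul_zagrebM2_intCast, ← mul_sum, hd, sub_mul]
    _ = r * ∑ v, ∑ w ∈ H.neighborFinset v, (gdeg H w : ℤ) - (∑ v, c v) * (r * (r - 1)) := by
        rw [sum_sub_distrib, mul_sum, sum_congr rfl fun v _ ↦ hend v, sum_mul]
    _ = r * zagrebM1 H - 2 * r * (r - 1) := by
        rw [sum_neighborFinset_right, sum_ite_mem_eq_two G he, zagrebM1_intCast]
        simp only [← sq]
        ring

theorem zagrebGap_deleteEdges_of_gregOfDeg :
    zagrebGap (G.deleteEdges {e}) = 4 * r - Fintype.card V * r - 2 := by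
  have h1 := two_mul_gsize_deleteEdges_of_gregOfDeg hG he
  have h2 := zagrebM1_deleteEdges_of_gregOfDeg hG he
  have h3 := two_mul_zagrebM2_deleteEdges_of_gregOfDeg hG he
  have : 2 * zagrebGap (G.deleteEdges {e}) = 2 * (4 * r - Fintype.card V * r - 2) := by
    unfold zagrebGap
    linear_combination (zagrebM1 (G.deleteEdges {e}) : ℤ) * h1 - Fintype.card V * h3 - 2 * h2
  linarith

theorem zagrebGap_compl_deleteEdges_of_gregOfDeg :
    zagrebGap (G.deleteEdges {e})ᶜ =
      Fintype.card V * r - 4 * r + 2 - (Fintype.card V - 2) ^ 2 := by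
  have key := zagrebGap_add_zagrebGap_compl (G.deleteEdges {e})
  rw [zagrebGap_deleteEdges_of_gregOfDeg hG he, zagrebM1_deleteEdges_of_gregOfDeg hG he,
    two_mul_gsize_deleteEdges_of_gregOfDeg hG he] at key
  linarith

theorem zagrebGap_deleteEdges_neg_of_gregOfDeg (hV : 4 ≤ Fintype.card V) :
    zagrebGap (G.deleteEdges {e}) < 0 := by
  have hV' : (4 : ℤ) ≤ Fintype.card V := by exact_mod_cast hV
  rw [zagrebGap_deleteEdges_of_gregOfDeg hG he]
  nlinarith [Int.natCast_nonneg r]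

theorem zagrebGap_compl_deleteEdges_neg_of_gregOfDeg (hV : 4 ≤ Fintype.card V) :
    zagrebGap (G.deleteEdges {e})ᶜ < 0 := by
  have hV' : (4 : ℤ) ≤ Fintype.card V := by exact_mod_cast hV
  have hr : (r : ℤ) + 1 ≤ Fintype.card V := by
    have := gdeg_lt_card G e.out.1
    rw [hG] at this
    exact_mod_cast this
  rw [zagrebGap_compl_deleteEdges_of_gregOfDeg hG he]
  nlinarith

end RegularDeleteEdge

def SimpleGraph.Iso.ofDeleteEdges {V W : Type*} [Fintype V] [DecidableEq V] [Fintype W]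
    [DecidableEq W] {G : SimpleGraph V} {G' : SimpleGraph W} {r : ℕ} {e : Sym2 V} {e' : Sym2 W}
    (hG : gregOfDeg G r) (hG' : gregOfDeg G' r) (he : e ∈ G.edgeSet) (he' : e' ∈ G'.edgeSet)
    (φ : G.deleteEdges {e} ≃g G'.deleteEdges {e'}) : G ≃g G' where
  toEquiv := φ.toEquiv
  map_rel_iff' {a b} := by
    have hmem : ∀ v, φ v ∈ e' ↔ v ∈ e := fun v ↦ by
      have h := gdeg_deleteEdges_add G he v
      have h' := gdeg_deleteEdges_add G' he' (φ v)
      rw [hG] at h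
      rw [hG', φ.gdeg_eq] at h'
      split_ifs at h h' <;> simp_all
    change G'.Adj (φ a) (φ b) ↔ G.Adj a b
    simp only [adj_iff_deleteEdges_adj_or G he, adj_iff_deleteEdges_adj_or G' he',
      mk_eq_iff_of_mem_edgeSet G he, mk_eq_iff_of_mem_edgeSet G' he', φ.map_adj_iff, hmem,
      φ.injective.ne_iff]

section Partner

variable {n : ℕ}

/-- The path `P₃` (a star with two leaves) on the vertices `0, 1, 2`, all other vertices
isolated. -/
def pathThree (hn : 3 ≤ n) : SimpleGraph (Fin n) :=
  (starGraph (0 : Fin 3)).map (Fin.castLEEmb hn)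

theorem gsize_pathThree (hn : 3 ≤ n) : gsize (pathThree hn) = 2 := by
  rw [pathThree, gsize_map, gsize_eq_card_edgeFinset]
  decide

theorem zagrebM1_pathThree (hn : 3 ≤ n) : zagrebM1 (pathThree hn) = 6 := by
  rw [pathThree, zagrebM1_map, zagrebM1]
  simp_rw [gdeg_eq_degree]
  decide

theorem zagrebM2_pathThree (hn : 3 ≤ n) : zagrebM2 (pathThree hn) = 4 := by
  rw [pathThree, zagrebM2_map, zagrebM2_eq_sum_edgeFinset]
  simp_rw [gdeg_eq_degree]
  decide

theorem zagrebGap_pathThree (hn : 3 ≤ n) : zagrebGap (pathThree hn) = 12 - 4 * n := by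
  rw [zagrebGap, gsize_pathThree, zagrebM1_pathThree, zagrebM2_pathThree, Fintype.card_fin]
  push_cast
  ring

theorem zagrebGap_compl_pathThree (hn : 3 ≤ n) :
    zagrebGap (pathThree hn)ᶜ = -3 * n ^ 2 + 18 * n - 28 := by
  have key := zagrebGap_add_zagrebGap_compl (pathThree hn)
  simp only [zagrebGap_pathThree, zagrebM1_pathThree, gsize_pathThree, Fintype.card_fin] at key
  push_cast at key
  linarith

open Classical in
noncomputable def zagrebPartner (hn : 3 ≤ n) (G : SimpleGraph (Fin n)) : SimpleGraph (Fin n) :=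
  if gregular G then
    if h : G.edgeSet.Nonempty then G.deleteEdges {h.some} else pathThree hn
  else Gᶜ

variable {G G₁ G₂ : SimpleGraph (Fin n)}

theorem zagrebPartner_of_not_gregular (hn : 3 ≤ n) (hG : ¬ gregular G) :
    zagrebPartner hn G = Gᶜ := by
  simp [zagrebPartner, hG]

theorem zagrebPartner_cases (hn : 3 ≤ n) (hG : gregular G) :
    (∃ r e, gregOfDeg G r ∧ e ∈ G.edgeSet ∧ zagrebPartner hn G = G.deleteEdges {e}) ∨
      (G = ⊥ ∧ zagrebPartner hn G = pathThree hn) := by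
  have ⟨r, hr⟩ := hG
  by_cases h : G.edgeSet.Nonempty
  · exact .inl ⟨r, h.some, hr, h.some_mem, by simp [zagrebPartner, hG, h]⟩
  · refine .inr ⟨edgeSet_eq_empty.1 (Set.not_nonempty_iff_eq_empty.1 h), ?_⟩
    simp [zagrebPartner, hG, h]

section NonIso

variable (hn : 3 < n) {r : ℕ} {e : Sym2 (Fin n)} (hG : gregOfDeg G r) (he : e ∈ G.edgeSet)
include hn

theorem isEmpty_iso_pathThree_compl : IsEmpty (pathThree hn.le ≃g (pathThree hn.le)ᶜ) := by
  refine ⟨fun φ ↦ ?_⟩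
  have h := two_mul_gsize_compl (pathThree hn.le)
  rw [φ.gsize_eq, gsize_pathThree, Fintype.card_fin] at h
  push_cast at h
  have hn' : (4 : ℤ) ≤ n := by exact_mod_cast hn
  nlinarith

include hG he

theorem isEmpty_iso_deleteEdges_pathThree : IsEmpty (G.deleteEdges {e} ≃g pathThree hn.le) := by
  refine ⟨fun φ ↦ ?_⟩
  have h₁ := two_mul_gsize_deleteEdges_of_gregOfDeg hG he
  have h₂ := zagrebM1_deleteEdges_of_gregOfDeg hG he
  rw [← φ.gsize_eq, gsize_pathThree, Fintype.card_fin] at h₁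
  rw [← φ.zagrebM1_eq, zagrebM1_pathThree, Fintype.card_fin] at h₂
  push_cast at h₁ h₂
  have hnr : (n : ℤ) * r = 6 := by linarith
  have hnr2 : (n : ℤ) * r ^ 2 = 6 * r := by rw [sq, ← mul_assoc, hnr]
  have hr : (r : ℤ) = 2 := by linarith
  have hn' : (4 : ℤ) ≤ n := by exact_mod_cast hn
  rw [hr] at hnr
  linarith

theorem isEmpty_iso_deleteEdges_compl_pathThree :
    IsEmpty (G.deleteEdges {e} ≃g (pathThree hn.le)ᶜ) := by
  refine ⟨fun φ ↦ ?_⟩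
  have h₁ := two_mul_gsize_deleteEdges_of_gregOfDeg hG he
  have h₂ := two_mul_gsize_compl (pathThree hn.le)
  rw [← φ.gsize_eq, h₂, gsize_pathThree, Fintype.card_fin] at h₁
  push_cast at h₁
  have hn' : (4 : ℤ) ≤ n := by exact_mod_cast hn
  rcases le_or_gt (r : ℤ) (n - 2) with hr | hr <;> nlinarith

end NonIso

section Injective

variable (hn : 3 < n)
include hn

theorem zagrebGap_zagrebPartner_neg (hgap : 0 ≤ zagrebGap G) :
    zagrebGap (zagrebPartner hn.le G) < 0 := by
  have hV : 4 ≤ Fintype.card (Fin n) := by simpa using hn.nat_succ_le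
  by_cases hG : gregular G
  · rcases zagrebPartner_cases hn.le hG with ⟨r, e, hr, he, hP⟩ | ⟨-, hP⟩ <;> rw [hP]
    · exact zagrebGap_deleteEdges_neg_of_gregOfDeg hr he hV
    · rw [zagrebGap_pathThree]
      omega
  · rw [zagrebPartner_of_not_gregular hn.le hG]
    exact zagrebGap_compl_neg_of_not_gregular G (by omega) hG hgap

theorem gregular_iff_zagrebGap_compl_zagrebPartner_neg (hgap : 0 ≤ zagrebGap G) :
    gregular G ↔ zagrebGap (zagrebPartner hn.le G)ᶜ < 0 := by
  refine ⟨fun hG ↦ ?_, fun h ↦ by_contra fun hG ↦ ?_⟩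
  · have hV : 4 ≤ Fintype.card (Fin n) := by simpa using hn.nat_succ_le
    rcases zagrebPartner_cases hn.le hG with ⟨r, e, hr, he, hP⟩ | ⟨-, hP⟩ <;> rw [hP]
    · exact zagrebGap_compl_deleteEdges_neg_of_gregOfDeg hr he hV
    · rw [zagrebGap_compl_pathThree]
      nlinarith
  · rw [zagrebPartner_of_not_gregular hn.le hG, compl_compl] at h
    omega

theorem nonempty_iso_of_zagrebPartner_of_gregular (h₁ : gregular G₁) (h₂ : gregular G₂)
    (φ : zagrebPartner hn.le G₁ ≃g zagrebPartner hn.le G₂) : Nonempty (G₁ ≃g G₂) := by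
  rcases zagrebPartner_cases hn.le h₁ with ⟨r₁, e₁, hr₁, he₁, hP₁⟩ | ⟨hb₁, hP₁⟩ <;>
    rcases zagrebPartner_cases hn.le h₂ with ⟨r₂, e₂, hr₂, he₂, hP₂⟩ | ⟨hb₂, hP₂⟩ <;>
    rw [hP₁, hP₂] at φ
  · obtain rfl : r₁ = r₂ := by
      have hm₁ := two_mul_gsize_deleteEdges_of_gregOfDeg hr₁ he₁
      have hm₂ := two_mul_gsize_deleteEdges_of_gregOfDeg hr₂ he₂
      rw [φ.gsize_eq, hm₁, Fintype.card_fin] at hm₂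
      have hn₀ : (n : ℤ) ≠ 0 := by positivity
      exact_mod_cast mul_left_cancel₀ hn₀ (by linarith : (n : ℤ) * r₁ = n * r₂)
    exact ⟨.ofDeleteEdges hr₁ hr₂ he₁ he₂ φ⟩
  · exact (isEmpty_iso_deleteEdges_pathThree hn hr₁ he₁).elim φ
  · exact (isEmpty_iso_deleteEdges_pathThree hn hr₂ he₂).elim φ.symm
  · exact ⟨hb₁ ▸ hb₂ ▸ .refl⟩

theorem nonempty_iso_of_zagrebPartner (h₁ : 0 ≤ zagrebGap G₁) (h₂ : 0 ≤ zagrebGap G₂)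
    (φ : zagrebPartner hn.le G₁ ≃g zagrebPartner hn.le G₂) : Nonempty (G₁ ≃g G₂) := by
  have hreg : gregular G₁ ↔ gregular G₂ := by
    rw [gregular_iff_zagrebGap_compl_zagrebPartner_neg hn h₁,
      gregular_iff_zagrebGap_compl_zagrebPartner_neg hn h₂, φ.compl.zagrebGap_eq]
  by_cases hG₁ : gregular G₁
  · exact nonempty_iso_of_zagrebPartner_of_gregular hn hG₁ (hreg.1 hG₁) φ
  · rw [zagrebPartner_of_not_gregular hn.le hG₁,
      zagrebPartner_of_not_gregular hn.le (mt hreg.2 hG₁)] at φ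
    simpa using Nonempty.intro φ.compl

theorem isEmpty_iso_zagrebPartner_compl_pathThree (hgap : 0 ≤ zagrebGap G) :
    IsEmpty (zagrebPartner hn.le G ≃g (pathThree hn.le)ᶜ) := by
  by_cases hG : gregular G
  · rcases zagrebPartner_cases hn.le hG with ⟨r, e, hr, he, hP⟩ | ⟨-, hP⟩ <;> rw [hP]
    · exact isEmpty_iso_deleteEdges_compl_pathThree hn hr he
    · exact isEmpty_iso_pathThree_compl hn
  · rw [zagrebPartner_of_not_gregular hn.le hG]
    refine ⟨fun φ ↦ ?_⟩
    have h := φ.compl.zagrebGap_eq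
    rw [compl_compl, compl_compl, zagrebGap_pathThree] at h
    omega

end Injective

end Partner

section Classes

variable {n : ℕ}

instance : Finite (IsoClasses n) :=
  Quotient.finite _

theorem isoClassesOf_zagreb_eq (p : ℕ → ℕ → Prop) (p' : ℤ → Prop)
    (hp : ∀ a b : ℕ, p a b ↔ p' (a - b)) :
    isoClassesOf n (fun G ↦ p (gsize G * zagrebM1 G) (n * zagrebM2 G)) =
      {q | p' (zagrebGap q.out)} := by
  ext q
  refine ⟨fun ⟨G, hG, hGq⟩ ↦ ?_, fun h ↦ ⟨q.out, ?_, Quotient.out_eq q⟩⟩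
  · obtain ⟨φ⟩ := Quotient.exact (hGq.trans (Quotient.out_eq q).symm)
    rw [Set.mem_ofPred_eq, φ.zagrebGap_eq, zagrebGap, Fintype.card_fin]
    exact_mod_cast (hp _ _).1 hG
  · rw [Set.mem_ofPred_eq, zagrebGap, Fintype.card_fin] at h
    exact (hp _ _).2 (by exact_mod_cast h)

theorem zagrebGap_out_mk (G : SimpleGraph (Fin n)) :
    zagrebGap (Quotient.mk (graphIsoSetoid n) G : IsoClasses n).out = zagrebGap G :=
  (Quotient.mk_out (s := graphIsoSetoid n) G).some.zagrebGap_eq.symm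

theorem ncard_zagrebGap_nonneg_lt (hn : 3 < n) :
    {q : IsoClasses n | 0 ≤ zagrebGap q.out}.ncard <
      {q : IsoClasses n | zagrebGap q.out < 0}.ncard := by
  let Φ (q : IsoClasses n) : IsoClasses n := Quotient.mk _ (zagrebPartner hn.le q.out)
  let X : IsoClasses n := Quotient.mk _ (pathThree hn.le)ᶜ
  have hinj : Set.InjOn Φ {q | 0 ≤ zagrebGap q.out} := fun q₁ h₁ q₂ h₂ h ↦
    Quotient.out_equiv_out.1 <| nonempty_iso_of_zagrebPartner hn h₁ h₂ (Quotient.exact h).some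
  have hmaps : Φ '' {q | 0 ≤ zagrebGap q.out} ⊆ {q | zagrebGap q.out < 0} \ {X} := by
    rintro _ ⟨q, hq, rfl⟩
    refine ⟨?_, fun h ↦ ?_⟩
    · rw [Set.mem_ofPred_eq, zagrebGap_out_mk]
      exact zagrebGap_zagrebPartner_neg hn hq
    · exact (isEmpty_iso_zagrebPartner_compl_pathThree hn hq).elim (Quotient.exact h).some
  have hX : X ∈ {q | zagrebGap q.out < 0} := by
    rw [Set.mem_ofPred_eq, zagrebGap_out_mk, zagrebGap_compl_pathThree]
    nlinarith
  calc _ = (Φ '' {q | 0 ≤ zagrebGap q.out}).ncard := hinj.ncard_image.symm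
    _ ≤ ({q | zagrebGap q.out < 0} \ {X}).ncard := Set.ncard_le_ncard hmaps
    _ < _ := Set.ncard_sdiff_singleton_lt_of_mem hX

end Classes

/-- For `n > 3`, with `A`, `B`, `C` the sets of isomorphism classes of
graphs of order `n` and size `m` satisfying `m·M1 > n·M2`, `m·M1 = n·M2`, and
`m·M1 < n·M2` respectively, one has `|A| + |B| < |C|`. -/
theorem stmt_10 (n : ℕ) (hn : 3 < n)
    (A : Set (IsoClasses n)) (B : Set (IsoClasses n)) (C : Set (IsoClasses n))
    (hA : A = isoClassesOf n fun G => gsize G * zagrebM1 G > n * zagrebM2 G)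
    (hB : B = isoClassesOf n fun G => gsize G * zagrebM1 G = n * zagrebM2 G)
    (hC : C = isoClassesOf n fun G => gsize G * zagrebM1 G < n * zagrebM2 G) :
    A.ncard + B.ncard < C.ncard := by
  rw [isoClassesOf_zagreb_eq (· > ·) (0 < ·) fun _ _ ↦ by omega] at hA
  rw [isoClassesOf_zagreb_eq (· = ·) (· = 0) fun _ _ ↦ by omega] at hB
  rw [isoClassesOf_zagreb_eq (· < ·) (· < 0) fun _ _ ↦ by omega] at hC
  have hAB : A ∪ B = {q | 0 ≤ zagrebGap q.out} := by
    ext q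
    simp only [hA, hB, Set.mem_union, Set.mem_ofPred_eq]
    omega
  have hdisj : Disjoint A B := by
    rw [hA, hB]
    exact Set.disjoint_left.2 fun q (h₁ : 0 < _) (h₂ : _ = 0) ↦ h₁.ne' h₂
  rw [← Set.ncard_union_eq hdisj, hAB, hC]
  exact ncard_zagrebGap_nonneg_lt hn
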